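/- Let f: C_k^n → C_3 be a polymorphism (n ≥ 2, k ≥ 3 odd) and i ∈ {1,...,n}. The integer d with f_E(e ×_i O_k) = 2d · O_3 is the same for all unoriented edges e of C_k^{n-1}, and moreover f_E(O_{k,i}^n) = (2k)^{n-1} d · O_3, where O_{k,i}^n is the chain of all oriented edges of C_k^n whose i-th coordinate is oriented according to O_k. -/

import Mathlib

/-- The oriented edge `[u,v]` as an edge chain: the antisymmetrized generator. -/
noncomputable def oe {V : Type*} [DecidableEq V] (u v : V) : V × V →₀ ℤ :=
  Finsupp.single (u, v) 1 - Finsupp.single (v, u) 1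

/-- The map on edge chains induced by a map on vertices. -/
noncomputable def fE {V W : Type*} [DecidableEq V] [DecidableEq W] (f : V → W) :
    (V × V →₀ ℤ) →+ (W × W →₀ ℤ) :=
  Finsupp.mapDomain.addMonoidHom (Prod.map f f)

/-- Adjacency in the `m`-cycle on vertex set `ZMod m`. -/
def CycAdj (m : ℕ) (u v : ZMod m) : Prop := v = u + 1 ∨ v = u - 1

/-- The oriented cycle `O_m = [0,1] + [1,2] + ⋯ + [m-1,0]` as an edge chain. -/
noncomputable def cycO (m : ℕ) : ZMod m × ZMod m →₀ ℤ :=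
  ∑ i ∈ Finset.range m, oe (i : ZMod m) ((i : ZMod m) + 1)

/-- Adjacency in the direct power `C_kⁿ`: coordinatewise adjacency in `C_k`. -/
def PowAdj (k n : ℕ) (x y : Fin n → ZMod k) : Prop := ∀ i, CycAdj k (x i) (y i)

open Classical in
/-- The edge chain `O_{k,i}ⁿ` of all oriented edges of `C_kⁿ` whose `i`-th coordinate is
oriented according to `O_k`. -/
noncomputable def Okin (k n : ℕ) [NeZero k] (i : Fin n) :
    ((Fin n → ZMod k) × (Fin n → ZMod k)) →₀ ℤ :=
  ∑ p ∈ Finset.univ.filter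
      (fun p : (Fin n → ZMod k) × (Fin n → ZMod k) =>
        PowAdj k n p.1 p.2 ∧ p.2 i = p.1 i + 1),
    oe p.1 p.2

open Classical in
/-- The oriented `2k`-cycle `e ×ᵢ O_k` in `C_kⁿ`: for an unoriented edge `e = (ub, vb)` of
`C_k^{n-1}` (encoded by two vertices of `C_kⁿ` whose coordinates away from `i` form an
edge; the `i`-th coordinates are irrelevant), the chain of oriented edges of `C_kⁿ` whose
restriction away from coordinate `i` is `{ub, vb}` and whose `i`-th coordinate is oriented
according to `O_k`. -/
noncomputable def cross (k n : ℕ) [NeZero k] (i : Fin n) (ub vb : Fin n → ZMod k) :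
    ((Fin n → ZMod k) × (Fin n → ZMod k)) →₀ ℤ :=
  ∑ p ∈ Finset.univ.filter
      (fun p : (Fin n → ZMod k) × (Fin n → ZMod k) =>
        ((∀ j, j ≠ i → p.1 j = ub j ∧ p.2 j = vb j) ∨
         (∀ j, j ≠ i → p.1 j = vb j ∧ p.2 j = ub j)) ∧
        PowAdj k n p.1 p.2 ∧ p.2 i = p.1 i + 1),
    oe p.1 p.2

section basics
variable {V W : Type*} [DecidableEq V] [DecidableEq W] (f : V → W)

lemma fE_oe (u v : V) : fE f (oe u v) = oe (f u) (f v) := by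
  rw [oe, map_sub]
  simp [fE, Finsupp.mapDomain.addMonoidHom_apply, Finsupp.mapDomain_single, oe]

lemma oe_rev (u v : V) : oe v u = - oe u v := by
  simp only [oe, neg_sub]

lemma oe_apply (u v x y : V) :
    oe u v (x, y) = (if u = x ∧ v = y then 1 else 0) - (if v = x ∧ u = y then 1 else 0) := by
  simp [oe, Finsupp.single_apply, Prod.ext_iff]

end basics

lemma zmod3_ne_cases {a b : ZMod 3} (h : a ≠ b) : b = a + 1 ∨ b = a - 1 := by
  revert h; revert a b; decide

lemma cycO_three : cycO 3 = oe 0 1 + oe 1 2 + oe 2 0 := by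
  simp [cycO, Finset.sum_range_succ]
  norm_num
  congr 1

lemma zmod3_sum {M : Type*} [AddCommMonoid M] (f : ZMod 3 → M) :
    ∑ a : ZMod 3, f a = f 0 + f 1 + f 2 := by
  rw [show (Finset.univ : Finset (ZMod 3)) = {0,1,2} from rfl]
  rw [show ({0,1,2} : Finset (ZMod 3)) = insert 0 (insert 1 {2}) from rfl]
  rw [Finset.sum_insert (by decide), Finset.sum_insert (by decide), Finset.sum_singleton,
    add_assoc]

lemma sum_apply' {ι V : Type*} [DecidableEq V] (S : Finset ι) (F : ι → (V × V →₀ ℤ))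
    (p : V × V) : (∑ s ∈ S, F s) p = ∑ s ∈ S, F s p :=
  Finsupp.finset_sum_apply S F p

def Good (X : ZMod 3 × ZMod 3 →₀ ℤ) : Prop :=
  X = X (0,1) • oe 0 1 + X (1,2) • oe 1 2 + X (2,0) • oe (2 : ZMod 3) 0

lemma tri (a : ZMod 3) : a = 0 ∨ a = 1 ∨ a = 2 := by revert a; decide

lemma good_oe {a b : ZMod 3} (hab : a ≠ b) : Good (oe a b) := by
  unfold Good
  have n1 : (0:ZMod 3) + 1 = 1 := by decide
  have n2 : (1:ZMod 3) + 1 = 2 := by decide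
  have n3 : (2:ZMod 3) + 1 = 0 := by decide
  have m1 : (0:ZMod 3) - 1 = 2 := by decide
  have m2 : (1:ZMod 3) - 1 = 0 := by decide
  have m3 : (2:ZMod 3) - 1 = 1 := by decide
  rcases zmod3_ne_cases hab with rfl | rfl <;> rcases tri a with rfl | rfl | rfl <;>
    simp only [n1, n2, n3, m1, m2, m3] <;>
    simp (config := { decide := true }) only [oe_apply] <;>
    norm_num <;>
    exact oe_rev _ _

lemma good_sum {ι : Type*} (S : Finset ι) (F : ι → (ZMod 3 × ZMod 3 →₀ ℤ))
    (h : ∀ s ∈ S, Good (F s)) : Good (∑ s ∈ S, F s) := by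
  refine Finset.sum_induction F Good (fun X Y hX hY => ?_) (by simp [Good]) h
  unfold Good at *
  rw [Finsupp.add_apply, Finsupp.add_apply, Finsupp.add_apply]
  conv_lhs => rw [hX, hY]
  simp only [add_smul]
  abel

lemma bd_step (t u v : ZMod 3) :
    (∑ a : ZMod 3, (oe u v (t,a) - oe u v (a,t)))
      = 2*((if u = t then 1 else 0) - (if v = t then 1 else 0)) := by
  rcases tri t with rfl | rfl | rfl <;> rcases tri u with rfl | rfl | rfl <;>
    rcases tri v with rfl | rfl | rfl <;>
    · rw [zmod3_sum]
      simp (config := { decide := true }) only [oe_apply]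
      try norm_num

lemma key {ι : Type*} (S : Finset ι) (g h : ι → ZMod 3) (hne : ∀ s ∈ S, g s ≠ h s)
    (hbal : ∀ t : ZMod 3,
      (S.filter fun s => g s = t).card = (S.filter fun s => h s = t).card) :
    (∑ s ∈ S, oe (g s) (h s)) = ((∑ s ∈ S, oe (g s) (h s)) (0,1)) • cycO 3 := by
  set X := ∑ s ∈ S, oe (g s) (h s) with hX
  have hg : Good X := good_sum S _ (fun s hs => good_oe (hne s hs))
  have hbd : ∀ t, (∑ a : ZMod 3, (X (t,a) - X (a,t))) = 0 := by
    intro t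
    have swap : (∑ a : ZMod 3, (X (t,a) - X (a,t)))
        = ∑ s ∈ S, (∑ a : ZMod 3, (oe (g s) (h s) (t,a) - oe (g s) (h s) (a,t))) := by
      rw [Finset.sum_comm]
      refine Finset.sum_congr rfl fun a _ => ?_
      rw [hX, sum_apply', sum_apply', Finset.sum_sub_distrib]
    rw [swap]
    have : ∀ s ∈ S, (∑ a : ZMod 3, (oe (g s) (h s) (t,a) - oe (g s) (h s) (a,t)))
        = 2*((if g s = t then (1:ℤ) else 0) - (if h s = t then 1 else 0)) :=
      fun s _ => bd_step t (g s) (h s)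
    rw [Finset.sum_congr rfl this]
    have expand : ∑ s ∈ S, (2*((if g s = t then (1:ℤ) else 0) - (if h s = t then 1 else 0)))
        = 2*((∑ s ∈ S, (if g s = t then (1:ℤ) else 0))
             - (∑ s ∈ S, (if h s = t then (1:ℤ) else 0))) := by
      simp only [mul_sub, Finset.mul_sum, Finset.sum_sub_distrib]
    rw [expand, Finset.sum_boole, Finset.sum_boole, hbal t]
    ring
  have e0 := hbd 0
  have e1 := hbd 1
  rw [zmod3_sum] at e0 e1
  rw [hg] at e0 e1
  simp only [Finsupp.add_apply, Finsupp.smul_apply, smul_eq_mul] at e0 e1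
  simp (config := { decide := true }) only [oe_apply] at e0 e1
  norm_num at e0 e1
  have hc12 : X (1,2) = X (0,1) := by linarith
  have hc13 : X (2,0) = X (0,1) := by linarith
  set a1 := X (0,1) with ha1
  set a2 := X (1,2) with ha2
  set a3 := X (2,0) with ha3
  have hg' : X = a1 • oe 0 1 + a2 • oe 1 2 + a3 • oe (2 : ZMod 3) 0 := hg
  rw [hg', hc12, hc13, cycO_three, smul_add, smul_add]

lemma key_even {ι : Type*} (S : Finset ι) (g h : ι → ZMod 3) (hne : ∀ s ∈ S, g s ≠ h s)
    (hbal : ∀ t : ZMod 3,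
      (S.filter fun s => g s = t).card = (S.filter fun s => h s = t).card)
    (hcard : Even S.card) :
    Even ((∑ s ∈ S, oe (g s) (h s)) (0,1)) := by
  have hk := key S g h hne hbal
  set X := ∑ s ∈ S, oe (g s) (h s) with hX
  set c := X (0,1) with hc
  have t1 : (∑ s ∈ S, (oe (g s) (h s) (0,1) + oe (g s) (h s) (1,2) + oe (g s) (h s) (2,0)))
      = 3*c := by
    rw [Finset.sum_add_distrib, Finset.sum_add_distrib, ← sum_apply', ← sum_apply',
      ← sum_apply', ← hX, hk]
    simp only [Finsupp.smul_apply, cycO_three, Finsupp.add_apply, smul_eq_mul]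
    simp (config := { decide := true }) only [oe_apply]
    norm_num
    ring
  have t2 : ∀ s ∈ S, ((oe (g s) (h s) (0,1) + oe (g s) (h s) (1,2) + oe (g s) (h s) (2,0)) % 2)
      = 1 := by
    intro s hs
    rcases zmod3_ne_cases (hne s hs) with hb | hb <;> rcases tri (g s) with ha | ha | ha <;>
      rw [ha] at hb <;> rw [ha, hb] <;>
      simp (config := { decide := true }) only [oe_apply,
        show ((0:ZMod 3) + 1 = 1) from rfl, show ((1:ZMod 3) + 1 = 2) from by decide,
        show ((2:ZMod 3) + 1 = 0) from by decide, show ((0:ZMod 3) - 1 = 2) from by decide,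
        show ((1:ZMod 3) - 1 = 0) from by decide, show ((2:ZMod 3) - 1 = 1) from by decide] <;>
      norm_num
  have h3 : (3*c) % 2 = 0 := by
    rw [← t1, Finset.sum_int_mod, Finset.sum_congr rfl t2, Finset.sum_const, nsmul_eq_mul,
      mul_one]
    obtain ⟨m, hm⟩ := hcard
    rw [hm]
    push_cast
    omega
  have : Even (3*c) := Int.even_iff.mpr h3
  rcases Int.even_mul.mp this with h | h
  · exact absurd h (by decide)
  · exact h

section power

variable {k n : ℕ} [NeZero k] {i : Fin n}

lemma cycAdj_symm {u v : ZMod k} (h : CycAdj k u v) : CycAdj k v u := by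
  rcases h with h | h
  · right; rw [h]; ring
  · left; rw [h]; ring

lemma zmod_one_ne_zero (hk : 3 ≤ k) : (1 : ZMod k) ≠ 0 := by
  intro h
  have h1 : ((1:ℕ) : ZMod k) = 0 := by exact_mod_cast h
  have := (ZMod.natCast_eq_zero_iff 1 k).mp h1
  have := Nat.le_of_dvd one_pos this
  omega

lemma cycAdj_irrefl (hk : 3 ≤ k) (u : ZMod k) : ¬ CycAdj k u u := by
  rintro (h | h)
  · rw [left_eq_add] at h
    exact zmod_one_ne_zero hk h
  · rw [eq_sub_iff_add_eq, add_eq_left] at h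
    exact zmod_one_ne_zero hk h

lemma exists_ne_idx (hn : 2 ≤ n) (i : Fin n) : ∃ j : Fin n, j ≠ i := by
  rcases Nat.lt_or_ge 0 i.val with h | h
  · refine ⟨⟨0, by omega⟩, fun he => ?_⟩
    have := congrArg Fin.val he
    simp at this
    omega
  · refine ⟨⟨1, by omega⟩, fun he => ?_⟩
    have := congrArg Fin.val he
    simp at this
    omega

lemma cross_half (hk : 3 ≤ k) (a b : Fin n → ZMod k)
    (hadj : ∀ j, j ≠ i → CycAdj k (a j) (b j))
    (S : Finset ((Fin n → ZMod k) × (Fin n → ZMod k)))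
    (hS : ∀ p, p ∈ S ↔ ((∀ j, j ≠ i → p.1 j = a j ∧ p.2 j = b j)
      ∧ PowAdj k n p.1 p.2 ∧ p.2 i = p.1 i + 1)) :
    ∑ p ∈ S, oe p.1 p.2
      = ∑ t : ZMod k, oe (Function.update a i t) (Function.update b i (t+1)) := by
  refine Finset.sum_nbij' (fun p => p.1 i)
    (fun t => (Function.update a i t, Function.update b i (t+1)))
    (fun p _ => Finset.mem_univ _) (fun t _ => ?mem) ?linv (fun t _ => Function.update_self i t a)
    ?heq
  case mem =>
    rw [hS]
    refine ⟨fun j hj => ⟨Function.update_of_ne hj _ _, Function.update_of_ne hj _ _⟩,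
      fun j => ?_, ?_⟩
    · by_cases hji : j = i
      · subst hji
        show CycAdj k (Function.update a j t j) (Function.update b j (t+1) j)
        rw [Function.update_self, Function.update_self]
        left; rfl
      · show CycAdj k (Function.update a i t j) (Function.update b i (t+1) j)
        rw [Function.update_of_ne hji, Function.update_of_ne hji]
        exact hadj j hji
    · show Function.update b i (t+1) i = Function.update a i t i + 1
      rw [Function.update_self, Function.update_self]
  case linv =>
    intro p hp
    rw [hS] at hp
    obtain ⟨hoff, hpadj, hi⟩ := hp
    have h1 : Function.update a i (p.1 i) = p.1 := by
      funext j
      by_cases hji : j = i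
      · subst hji; rw [Function.update_self]
      · rw [Function.update_of_ne hji]; exact ((hoff j hji).1).symm
    have h2 : Function.update b i (p.1 i + 1) = p.2 := by
      funext j
      by_cases hji : j = i
      · subst hji; rw [Function.update_self]; exact hi.symm
      · rw [Function.update_of_ne hji]; exact ((hoff j hji).2).symm
    rw [h1, h2]
  case heq =>
    intro p hp
    rw [hS] at hp
    obtain ⟨hoff, hpadj, hi⟩ := hp
    have h1 : Function.update a i (p.1 i) = p.1 := by
      funext j
      by_cases hji : j = i
      · subst hji; rw [Function.update_self]
      · rw [Function.update_of_ne hji]; exact ((hoff j hji).1).symm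
    have h2 : Function.update b i (p.1 i + 1) = p.2 := by
      funext j
      by_cases hji : j = i
      · subst hji; rw [Function.update_self]; exact hi.symm
      · rw [Function.update_of_ne hji]; exact ((hoff j hji).2).symm
    rw [h1, h2]

open Classical in
lemma cross_eq (hk : 3 ≤ k) (hn : 2 ≤ n) (ub vb : Fin n → ZMod k)
    (hadj : ∀ j, j ≠ i → CycAdj k (ub j) (vb j)) :
    cross k n i ub vb
      = (∑ t : ZMod k, oe (Function.update ub i t) (Function.update vb i (t+1)))
        + ∑ t : ZMod k, oe (Function.update vb i t) (Function.update ub i (t+1)) := by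
  obtain ⟨j0, hj0⟩ := exists_ne_idx hn i
  have hne0 : ub j0 ≠ vb j0 := fun h => cycAdj_irrefl hk _ (h ▸ hadj j0 hj0)
  have hdisj : Disjoint
      (Finset.univ.filter (fun p : (Fin n → ZMod k) × (Fin n → ZMod k) =>
        (∀ j, j ≠ i → p.1 j = ub j ∧ p.2 j = vb j) ∧ PowAdj k n p.1 p.2 ∧ p.2 i = p.1 i + 1))
      (Finset.univ.filter (fun p : (Fin n → ZMod k) × (Fin n → ZMod k) =>
        (∀ j, j ≠ i → p.1 j = vb j ∧ p.2 j = ub j) ∧ PowAdj k n p.1 p.2 ∧ p.2 i = p.1 i + 1)) := by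
    rw [Finset.disjoint_left]
    intro p hp hq
    simp only [Finset.mem_filter, Finset.mem_univ, true_and] at hp hq
    exact hne0 (((hp.1 j0 hj0).1).symm.trans ((hq.1 j0 hj0).1))
  have hsets : (Finset.univ.filter (fun p : (Fin n → ZMod k) × (Fin n → ZMod k) =>
        ((∀ j, j ≠ i → p.1 j = ub j ∧ p.2 j = vb j) ∨ (∀ j, j ≠ i → p.1 j = vb j ∧ p.2 j = ub j))
          ∧ PowAdj k n p.1 p.2 ∧ p.2 i = p.1 i + 1))
      = (Finset.univ.filter (fun p : (Fin n → ZMod k) × (Fin n → ZMod k) =>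
          (∀ j, j ≠ i → p.1 j = ub j ∧ p.2 j = vb j) ∧ PowAdj k n p.1 p.2 ∧ p.2 i = p.1 i + 1))
        ∪ (Finset.univ.filter (fun p : (Fin n → ZMod k) × (Fin n → ZMod k) =>
          (∀ j, j ≠ i → p.1 j = vb j ∧ p.2 j = ub j) ∧ PowAdj k n p.1 p.2 ∧ p.2 i = p.1 i + 1)) := by
    ext p
    simp only [Finset.mem_filter, Finset.mem_union, Finset.mem_univ, true_and]
    tauto
  rw [cross, Finset.sum_congr hsets (fun _ _ => rfl), Finset.sum_union hdisj,
    cross_half hk ub vb hadj _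
      (fun p => by simp only [Finset.mem_filter, Finset.mem_univ, true_and]),
    cross_half hk vb ub (fun j hj => cycAdj_symm (hadj j hj)) _
      (fun p => by simp only [Finset.mem_filter, Finset.mem_univ, true_and])]

end power

lemma quad (a b c d : ZMod 3) (hab : a ≠ b) (hbc : b ≠ c) (hcd : c ≠ d) (hda : d ≠ a) :
    oe a b + oe b c + oe c d + oe d a = 0 := by
  have h3 : (3:ZMod 3) = 0 := by decide
  rcases zmod3_ne_cases hab with rfl | rfl <;>
    rcases zmod3_ne_cases hbc with rfl | rfl <;>
      rcases zmod3_ne_cases hcd with rfl | rfl <;>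
        first
        | (exact (hda (by linear_combination h3)).elim)
        | (exact (hda (by linear_combination -h3)).elim)
        | (ring_nf; simp only [oe]; abel)

lemma zshift {k : ℕ} [NeZero k] {M : Type*} [AddCommMonoid M] (F : ZMod k → M) :
    ∑ t : ZMod k, F (t+1) = ∑ t : ZMod k, F t :=
  Fintype.sum_equiv (Equiv.addRight 1) _ _ (fun _ => rfl)

lemma telescope {V : Type*} [DecidableEq V] {k : ℕ} [NeZero k] (P Q R S : ZMod k → V) :
    ∑ t : ZMod k,
      ((oe (P t) (Q (t+1)) + oe (Q (t+1)) (R (t+1+1)) + oe (R (t+1+1)) (S (t+1))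
          + oe (S (t+1)) (P t))
        + (oe (Q t) (P (t+1)) + oe (P (t+1)) (S (t+1+1)) + oe (S (t+1+1)) (R (t+1))
          + oe (R (t+1)) (Q t)))
      = ((∑ t : ZMod k, oe (P t) (Q (t+1))) + ∑ t : ZMod k, oe (Q t) (P (t+1)))
        - ((∑ t : ZMod k, oe (R t) (S (t+1))) + ∑ t : ZMod k, oe (S t) (R (t+1))) := by
  simp only [Finset.sum_add_distrib]
  have s1 : ∑ t : ZMod k, oe (R (t+1+1)) (S (t+1)) = - ∑ t : ZMod k, oe (S t) (R (t+1)) := by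
    rw [← zshift (fun t => oe (S t) (R (t+1))), ← Finset.sum_neg_distrib]
    exact Finset.sum_congr rfl fun t _ => oe_rev _ _
  have s2 : ∑ t : ZMod k, oe (S (t+1+1)) (R (t+1)) = - ∑ t : ZMod k, oe (R t) (S (t+1)) := by
    rw [← zshift (fun t => oe (R t) (S (t+1))), ← Finset.sum_neg_distrib]
    exact Finset.sum_congr rfl fun t _ => oe_rev _ _
  have s3 : ∑ t : ZMod k, oe (S (t+1)) (P t) = - ∑ t : ZMod k, oe (P (t+1)) (S (t+1+1)) := by
    rw [zshift (fun t => oe (P t) (S (t+1))), ← Finset.sum_neg_distrib]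
    exact Finset.sum_congr rfl fun t _ => oe_rev _ _
  have s4 : ∑ t : ZMod k, oe (R (t+1)) (Q t) = - ∑ t : ZMod k, oe (Q (t+1)) (R (t+1+1)) := by
    rw [zshift (fun t => oe (Q t) (R (t+1))), ← Finset.sum_neg_distrib]
    exact Finset.sum_congr rfl fun t _ => oe_rev _ _
  rw [s1, s2, s3, s4]
  abel

section power2
variable {k n : ℕ} [NeZero k] {i : Fin n}

lemma upd_adj {x y : Fin n → ZMod k} (hxy : ∀ j, j ≠ i → CycAdj k (x j) (y j)) (t : ZMod k) :
    PowAdj k n (Function.update x i t) (Function.update y i (t+1)) := by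
  intro j
  by_cases hji : j = i
  · subst hji
    rw [Function.update_self, Function.update_self]
    left; rfl
  · rw [Function.update_of_ne hji, Function.update_of_ne hji]
    exact hxy j hji

lemma upd_adj' {x y : Fin n → ZMod k} (hxy : ∀ j, j ≠ i → CycAdj k (x j) (y j)) (t : ZMod k) :
    PowAdj k n (Function.update x i (t+1)) (Function.update y i t) := by
  intro j
  by_cases hji : j = i
  · subst hji
    rw [Function.update_self, Function.update_self]
    right
    rw [add_sub_cancel_right]
  · rw [Function.update_of_ne hji, Function.update_of_ne hji]
    exact hxy j hji

lemma cross_fE_eq (hk : 3 ≤ k) (hn : 2 ≤ n) (f : (Fin n → ZMod k) → ZMod 3)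
    (hf : ∀ x y, PowAdj k n x y → f x ≠ f y) (u v u' v' : Fin n → ZMod k)
    (huv : ∀ j, j ≠ i → CycAdj k (u j) (v j))
    (hu'v' : ∀ j, j ≠ i → CycAdj k (u' j) (v' j))
    (huv' : ∀ j, j ≠ i → CycAdj k (u j) (v' j))
    (hvu' : ∀ j, j ≠ i → CycAdj k (v j) (u' j)) :
    fE f (cross k n i u v) = fE f (cross k n i u' v') := by
  have hid : (∑ t : ZMod k,
      ((oe (Function.update u i t) (Function.update v i (t+1))
          + oe (Function.update v i (t+1)) (Function.update u' i (t+1+1))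
          + oe (Function.update u' i (t+1+1)) (Function.update v' i (t+1))
          + oe (Function.update v' i (t+1)) (Function.update u i t))
        + (oe (Function.update v i t) (Function.update u i (t+1))
          + oe (Function.update u i (t+1)) (Function.update v' i (t+1+1))
          + oe (Function.update v' i (t+1+1)) (Function.update u' i (t+1))
          + oe (Function.update u' i (t+1)) (Function.update v i t))))
      = cross k n i u v - cross k n i u' v' := by
    rw [cross_eq hk hn u v huv, cross_eq hk hn u' v' hu'v']
    exact telescope _ _ _ _
  have himg := congrArg (fE f) hid
  rw [map_sub, map_sum] at himg
  have hz : ∀ t ∈ (Finset.univ : Finset (ZMod k)),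
      fE f ((oe (Function.update u i t) (Function.update v i (t+1))
          + oe (Function.update v i (t+1)) (Function.update u' i (t+1+1))
          + oe (Function.update u' i (t+1+1)) (Function.update v' i (t+1))
          + oe (Function.update v' i (t+1)) (Function.update u i t))
        + (oe (Function.update v i t) (Function.update u i (t+1))
          + oe (Function.update u i (t+1)) (Function.update v' i (t+1+1))
          + oe (Function.update v' i (t+1+1)) (Function.update u' i (t+1))
          + oe (Function.update u' i (t+1)) (Function.update v i t))) = 0 := by
    intro t _
    simp only [map_add, fE_oe]
    rw [quad _ _ _ _
        (hf _ _ (upd_adj huv t))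
        (hf _ _ (upd_adj hvu' (t+1)))
        (hf _ _ (upd_adj' hu'v' (t+1)))
        (hf _ _ (upd_adj' (fun j hj => cycAdj_symm (huv' j hj)) t)),
      quad _ _ _ _
        (hf _ _ (upd_adj (fun j hj => cycAdj_symm (huv j hj)) t))
        (hf _ _ (upd_adj huv' (t+1)))
        (hf _ _ (upd_adj' (fun j hj => cycAdj_symm (hu'v' j hj)) (t+1)))
        (hf _ _ (upd_adj' (fun j hj => cycAdj_symm (hvu' j hj)) t)),
      add_zero]
  rw [Finset.sum_congr rfl hz, Finset.sum_const, smul_zero] at himg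
  exact (sub_eq_zero.mp himg.symm)

end power2

section power3
variable {k n : ℕ} [NeZero k] {i : Fin n}

lemma cross_symm (ub vb : Fin n → ZMod k) : cross k n i ub vb = cross k n i vb ub := by
  rw [cross, cross]
  refine Finset.sum_congr ?_ (fun _ _ => rfl)
  ext p
  simp only [Finset.mem_filter, Finset.mem_univ, true_and]
  tauto

lemma share (hk : 3 ≤ k) (hn : 2 ≤ n) (f : (Fin n → ZMod k) → ZMod 3)
    (hf : ∀ x y, PowAdj k n x y → f x ≠ f y) {u u' v : Fin n → ZMod k}
    (h1 : ∀ j, j ≠ i → CycAdj k (u j) (v j)) (h2 : ∀ j, j ≠ i → CycAdj k (u' j) (v j)) :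
    fE f (cross k n i u v) = fE f (cross k n i u' v) :=
  cross_fE_eq hk hn f hf u v u' v h1 h2 h1 (fun j hj => cycAdj_symm (h2 j hj))

lemma reach (hkodd : Odd k) (v v' : Fin n → ZMod k) :
    Relation.ReflTransGen (fun a b : Fin n → ZMod k => ∀ j, j ≠ i → CycAdj k (a j) (b j))
      v v' := by
  have hco : Nat.Coprime 2 k := hkodd.coprime_two_left
  set w : (ZMod k)ˣ := ZMod.unitOfCoprime 2 hco with hw
  have h2w : (2 : ZMod k) * ↑w⁻¹ = 1 := by
    have h1 : ((w : ZMod k)) = ((2:ℕ) : ZMod k) := ZMod.coe_unitOfCoprime 2 hco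
    have h2 : (w : ZMod k) * ↑w⁻¹ = 1 := by
      rw [← Units.val_mul, mul_inv_cancel, Units.val_one]
    rw [h1] at h2
    push_cast at h2
    exact h2
  set q : Fin n → ℕ := fun j => ((v j - v' j) * ↑w⁻¹).val with hq
  set g : ℕ → (Fin n → ZMod k) :=
    fun τ j => v j + (τ : ZMod k) - 2 * ((min τ (q j) : ℕ) : ZMod k) with hg
  have hg0 : g 0 = v := by
    funext j
    simp [hg]
  have hgL : g (2*k) = v' := by
    funext j
    have hlt : q j < k := ZMod.val_lt _
    have hmin : min (2*k) (q j) = q j := by omega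
    have hcast : ((q j : ℕ) : ZMod k) = (v j - v' j) * ↑w⁻¹ := ZMod.natCast_zmod_val _
    rw [hg]
    dsimp only
    rw [hmin, hcast]
    push_cast [ZMod.natCast_self]
    linear_combination (v' j - v j) * h2w
  have hstep : ∀ τ : ℕ, ∀ j, CycAdj k (g τ j) (g (τ+1) j) := by
    intro τ j
    rcases le_or_gt (q j) τ with h | h
    · left
      rw [hg]
      dsimp only
      rw [min_eq_right h, min_eq_right (by omega : q j ≤ τ + 1)]
      push_cast
      ring
    · right
      rw [hg]
      dsimp only
      rw [min_eq_left (by omega : τ ≤ q j), min_eq_left (by omega : τ + 1 ≤ q j)]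
      push_cast
      ring
  have hrtg : ∀ N : ℕ, Relation.ReflTransGen
      (fun a b : Fin n → ZMod k => ∀ j, j ≠ i → CycAdj k (a j) (b j)) v (g N) := by
    intro N
    induction N with
    | zero => rw [hg0]
    | succ N ih => exact ih.tail (fun j _ => hstep N j)
  have := hrtg (2*k)
  rwa [hgL] at this

lemma cross_fE_const (hk : 3 ≤ k) (hn : 2 ≤ n) (hkodd : Odd k)
    (f : (Fin n → ZMod k) → ZMod 3) (hf : ∀ x y, PowAdj k n x y → f x ≠ f y)
    (u v u' v' : Fin n → ZMod k)
    (h1 : ∀ j, j ≠ i → CycAdj k (u j) (v j)) (h2 : ∀ j, j ≠ i → CycAdj k (u' j) (v' j)) :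
    fE f (cross k n i u v) = fE f (cross k n i u' v') := by
  have H : ∀ v v' : Fin n → ZMod k, Relation.ReflTransGen
      (fun a b : Fin n → ZMod k => ∀ j, j ≠ i → CycAdj k (a j) (b j)) v v' →
      ∀ u u' : Fin n → ZMod k, (∀ j, j ≠ i → CycAdj k (u j) (v j)) →
        (∀ j, j ≠ i → CycAdj k (u' j) (v' j)) →
        fE f (cross k n i u v) = fE f (cross k n i u' v') := by
    intro v v' hr
    induction hr with
    | refl => exact fun u u' hu hu' => share hk hn f hf hu hu'
    | @tail w v' hvw hwv' ih =>
        intro u u' hu hu'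
        calc fE f (cross k n i u v) = fE f (cross k n i v' w) :=
              ih u v' hu (fun j hj => cycAdj_symm (hwv' j hj))
          _ = fE f (cross k n i w v') := by rw [cross_symm]
          _ = fE f (cross k n i u' v') := share hk hn f hf hwv' hu'
  exact H v v' (reach hkodd v v') u u' h1 h2

end power3

section power4
variable {k n : ℕ} [NeZero k] {i : Fin n}

open Classical

lemma half_card (hk : 3 ≤ k) (a b : Fin n → ZMod k)
    (hadj : ∀ j, j ≠ i → CycAdj k (a j) (b j))
    (S : Finset ((Fin n → ZMod k) × (Fin n → ZMod k)))
    (hS : ∀ p, p ∈ S ↔ ((∀ j, j ≠ i → p.1 j = a j ∧ p.2 j = b j)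
      ∧ PowAdj k n p.1 p.2 ∧ p.2 i = p.1 i + 1)) :
    S.card = k := by
  have : S.card = (Finset.univ : Finset (ZMod k)).card := by
    refine Finset.card_nbij' (fun p => p.1 i)
      (fun t => (Function.update a i t, Function.update b i (t+1)))
      (fun p _ => Finset.mem_univ _) (fun t _ => ?mem) ?linv
      (fun t _ => Function.update_self i t a)
    case mem =>
      rw [Finset.mem_coe, hS]
      refine ⟨fun j hj => ⟨Function.update_of_ne hj _ _, Function.update_of_ne hj _ _⟩,
        upd_adj hadj t, ?_⟩
      show Function.update b i (t+1) i = Function.update a i t i + 1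
      rw [Function.update_self, Function.update_self]
    case linv =>
      intro p hp
      rw [Finset.mem_coe, hS] at hp
      obtain ⟨hoff, hpadj, hi⟩ := hp
      have h1 : Function.update a i (p.1 i) = p.1 := by
        funext j
        by_cases hji : j = i
        · subst hji; rw [Function.update_self]
        · rw [Function.update_of_ne hji]; exact ((hoff j hji).1).symm
      have h2 : Function.update b i (p.1 i + 1) = p.2 := by
        funext j
        by_cases hji : j = i
        · subst hji; rw [Function.update_self]; exact hi.symm
        · rw [Function.update_of_ne hji]; exact ((hoff j hji).2).symm
      show (Function.update a i (p.1 i), Function.update b i (p.1 i + 1)) = p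
      rw [h1, h2]
  rw [this, Finset.card_univ, ZMod.card]

lemma cross_card (hk : 3 ≤ k) (hn : 2 ≤ n) (ub vb : Fin n → ZMod k)
    (hadj : ∀ j, j ≠ i → CycAdj k (ub j) (vb j)) :
    (Finset.univ.filter (fun p : (Fin n → ZMod k) × (Fin n → ZMod k) =>
        ((∀ j, j ≠ i → p.1 j = ub j ∧ p.2 j = vb j) ∨
         (∀ j, j ≠ i → p.1 j = vb j ∧ p.2 j = ub j)) ∧
        PowAdj k n p.1 p.2 ∧ p.2 i = p.1 i + 1)).card = 2 * k := by
  obtain ⟨j0, hj0⟩ := exists_ne_idx hn i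
  have hne0 : ub j0 ≠ vb j0 := fun h => cycAdj_irrefl hk _ (h ▸ hadj j0 hj0)
  have hdisj : Disjoint
      (Finset.univ.filter (fun p : (Fin n → ZMod k) × (Fin n → ZMod k) =>
        (∀ j, j ≠ i → p.1 j = ub j ∧ p.2 j = vb j) ∧ PowAdj k n p.1 p.2 ∧ p.2 i = p.1 i + 1))
      (Finset.univ.filter (fun p : (Fin n → ZMod k) × (Fin n → ZMod k) =>
        (∀ j, j ≠ i → p.1 j = vb j ∧ p.2 j = ub j) ∧ PowAdj k n p.1 p.2 ∧ p.2 i = p.1 i + 1)) := by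
    rw [Finset.disjoint_left]
    intro p hp hq
    simp only [Finset.mem_filter, Finset.mem_univ, true_and] at hp hq
    exact hne0 (((hp.1 j0 hj0).1).symm.trans ((hq.1 j0 hj0).1))
  have hsets : (Finset.univ.filter (fun p : (Fin n → ZMod k) × (Fin n → ZMod k) =>
        ((∀ j, j ≠ i → p.1 j = ub j ∧ p.2 j = vb j) ∨ (∀ j, j ≠ i → p.1 j = vb j ∧ p.2 j = ub j))
          ∧ PowAdj k n p.1 p.2 ∧ p.2 i = p.1 i + 1))
      = (Finset.univ.filter (fun p : (Fin n → ZMod k) × (Fin n → ZMod k) =>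
          (∀ j, j ≠ i → p.1 j = ub j ∧ p.2 j = vb j) ∧ PowAdj k n p.1 p.2 ∧ p.2 i = p.1 i + 1))
        ∪ (Finset.univ.filter (fun p : (Fin n → ZMod k) × (Fin n → ZMod k) =>
          (∀ j, j ≠ i → p.1 j = vb j ∧ p.2 j = ub j) ∧ PowAdj k n p.1 p.2 ∧ p.2 i = p.1 i + 1)) := by
    ext p
    simp only [Finset.mem_filter, Finset.mem_union, Finset.mem_univ, true_and]
    tauto
  rw [hsets, Finset.card_union_of_disjoint hdisj,
    half_card hk ub vb hadj _
      (fun p => by simp only [Finset.mem_filter, Finset.mem_univ, true_and]),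
    half_card hk vb ub (fun j hj => cycAdj_symm (hadj j hj)) _
      (fun p => by simp only [Finset.mem_filter, Finset.mem_univ, true_and])]
  ring

lemma cross_rep (hk : 3 ≤ k) (hn : 2 ≤ n) (f : (Fin n → ZMod k) → ZMod 3)
    (hf : ∀ x y, PowAdj k n x y → f x ≠ f y) (ub vb : Fin n → ZMod k)
    (hadj : ∀ j, j ≠ i → CycAdj k (ub j) (vb j)) :
    fE f (cross k n i ub vb) = (fE f (cross k n i ub vb) (0,1)) • cycO 3
      ∧ Even (fE f (cross k n i ub vb) (0,1)) := by
  set S := Finset.univ.filter (fun p : (Fin n → ZMod k) × (Fin n → ZMod k) =>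
        ((∀ j, j ≠ i → p.1 j = ub j ∧ p.2 j = vb j) ∨
         (∀ j, j ≠ i → p.1 j = vb j ∧ p.2 j = ub j)) ∧
        PowAdj k n p.1 p.2 ∧ p.2 i = p.1 i + 1) with hSdef
  have hmem : ∀ p, p ∈ S ↔ (((∀ j, j ≠ i → p.1 j = ub j ∧ p.2 j = vb j) ∨
         (∀ j, j ≠ i → p.1 j = vb j ∧ p.2 j = ub j)) ∧
        PowAdj k n p.1 p.2 ∧ p.2 i = p.1 i + 1) := by
    intro p
    rw [hSdef]
    simp only [Finset.mem_filter, Finset.mem_univ, true_and]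
  have hexp : fE f (cross k n i ub vb) = ∑ p ∈ S, oe (f p.1) (f p.2) := by
    rw [cross, map_sum]
    exact Finset.sum_congr rfl (fun p _ => fE_oe f _ _)
  have hne : ∀ p ∈ S, f p.1 ≠ f p.2 := by
    intro p hp
    exact hf _ _ ((hmem p).mp hp).2.1
  -- the orientation-shift bijection
  have hsig : ∀ p, p ∈ S →
      (((fun j => if j = i then p.1 i - 1 else p.2 j), p.1) :
        (Fin n → ZMod k) × (Fin n → ZMod k)) ∈ S := by
    intro p hp
    rw [hmem] at hp ⊢
    obtain ⟨hcase, hPadj, hpi⟩ := hp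
    refine ⟨?_, fun j => ?_, ?_⟩
    · rcases hcase with hA | hB
      · right
        intro j hj
        constructor
        · show (if j = i then p.1 i - 1 else p.2 j) = vb j
          rw [if_neg hj]; exact (hA j hj).2
        · exact (hA j hj).1
      · left
        intro j hj
        constructor
        · show (if j = i then p.1 i - 1 else p.2 j) = ub j
          rw [if_neg hj]; exact (hB j hj).2
        · exact (hB j hj).1
    · by_cases hji : j = i
      · subst hji
        show CycAdj k (if j = j then p.1 j - 1 else p.2 j) (p.1 j)
        rw [if_pos rfl]
        left
        rw [sub_add_cancel]
      · show CycAdj k (if j = i then p.1 i - 1 else p.2 j) (p.1 j)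
        rw [if_neg hji]
        exact cycAdj_symm (hPadj j)
    · show p.1 i = (if i = i then p.1 i - 1 else p.2 i) + 1
      rw [if_pos rfl, sub_add_cancel]
  have hpsi : ∀ p, p ∈ S →
      ((p.2, (fun j => if j = i then p.2 i + 1 else p.1 j)) :
        (Fin n → ZMod k) × (Fin n → ZMod k)) ∈ S := by
    intro p hp
    rw [hmem] at hp ⊢
    obtain ⟨hcase, hPadj, hpi⟩ := hp
    refine ⟨?_, fun j => ?_, ?_⟩
    · rcases hcase with hA | hB
      · right
        intro j hj
        refine ⟨(hA j hj).2, ?_⟩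
        show (if j = i then p.2 i + 1 else p.1 j) = ub j
        rw [if_neg hj]; exact (hA j hj).1
      · left
        intro j hj
        refine ⟨(hB j hj).2, ?_⟩
        show (if j = i then p.2 i + 1 else p.1 j) = vb j
        rw [if_neg hj]; exact (hB j hj).1
    · by_cases hji : j = i
      · subst hji
        show CycAdj k (p.2 j) (if j = j then p.2 j + 1 else p.1 j)
        rw [if_pos rfl]
        left; rfl
      · show CycAdj k (p.2 j) (if j = i then p.2 i + 1 else p.1 j)
        rw [if_neg hji]
        exact cycAdj_symm (hPadj j)
    · show (if i = i then p.2 i + 1 else p.1 i) = p.2 i + 1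
      rw [if_pos rfl]
  have hlinv : ∀ p ∈ S,
      ((((fun j => if j = i then p.1 i - 1 else p.2 j), p.1) :
        (Fin n → ZMod k) × (Fin n → ZMod k)).2,
       (fun j => if j = i then (((fun j' => if j' = i then p.1 i - 1 else p.2 j'), p.1) :
        (Fin n → ZMod k) × (Fin n → ZMod k)).2 i + 1
        else (((fun j' => if j' = i then p.1 i - 1 else p.2 j'), p.1)).1 j)) = p := by
    intro p hp
    obtain ⟨hcase, hPadj, hpi⟩ := (hmem p).mp hp
    refine Prod.ext rfl ?_
    show (fun j => if j = i then p.1 i + 1 else (if j = i then p.1 i - 1 else p.2 j)) = p.2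
    funext j
    by_cases hji : j = i
    · subst hji; rw [if_pos rfl]; exact hpi.symm
    · rw [if_neg hji, if_neg hji]
  have hrinv : ∀ p ∈ S,
      (((fun j => if j = i then ((p.2, (fun j' => if j' = i then p.2 i + 1 else p.1 j')) :
          (Fin n → ZMod k) × (Fin n → ZMod k)).1 i - 1
        else ((p.2, (fun j' => if j' = i then p.2 i + 1 else p.1 j'))).2 j),
       ((p.2, (fun j' => if j' = i then p.2 i + 1 else p.1 j')) :
          (Fin n → ZMod k) × (Fin n → ZMod k)).1) : _ × _) = p := by
    intro p hp
    obtain ⟨hcase, hPadj, hpi⟩ := (hmem p).mp hp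
    refine Prod.ext ?_ rfl
    show (fun j => if j = i then p.2 i - 1 else (if j = i then p.2 i + 1 else p.1 j)) = p.1
    funext j
    by_cases hji : j = i
    · subst hji; rw [if_pos rfl, hpi, add_sub_cancel_right]
    · rw [if_neg hji, if_neg hji]
  have hbal : ∀ t : ZMod 3,
      (S.filter fun p => f p.1 = t).card = (S.filter fun p => f p.2 = t).card := by
    intro t
    refine Finset.card_nbij'
      (fun p => ((fun j => if j = i then p.1 i - 1 else p.2 j), p.1))
      (fun p => (p.2, (fun j => if j = i then p.2 i + 1 else p.1 j)))
      ?_ ?_ ?_ ?_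
    · intro p hp
      rw [Finset.mem_coe, Finset.mem_filter] at hp ⊢
      exact ⟨hsig p hp.1, hp.2⟩
    · intro p hp
      rw [Finset.mem_coe, Finset.mem_filter] at hp ⊢
      exact ⟨hpsi p hp.1, hp.2⟩
    · intro p hp
      rw [Finset.mem_coe, Finset.mem_filter] at hp
      exact hlinv p hp.1
    · intro p hp
      rw [Finset.mem_coe, Finset.mem_filter] at hp
      exact hrinv p hp.1
  have hcard : Even S.card := by
    rw [hSdef, cross_card hk hn ub vb hadj]
    exact even_two_mul k
  constructor
  · rw [hexp]
    exact key S _ _ hne hbal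
  · rw [hexp]
    exact key_even S _ _ hne hbal hcard

lemma okin_rep (f : (Fin n → ZMod k) → ZMod 3)
    (hf : ∀ x y, PowAdj k n x y → f x ≠ f y) :
    fE f (Okin k n i) = (fE f (Okin k n i) (0,1)) • cycO 3 := by
  set S := Finset.univ.filter (fun p : (Fin n → ZMod k) × (Fin n → ZMod k) =>
        PowAdj k n p.1 p.2 ∧ p.2 i = p.1 i + 1) with hSdef
  have hmem : ∀ p, p ∈ S ↔ (PowAdj k n p.1 p.2 ∧ p.2 i = p.1 i + 1) := by
    intro p
    rw [hSdef]
    simp only [Finset.mem_filter, Finset.mem_univ, true_and]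
  have hexp : fE f (Okin k n i) = ∑ p ∈ S, oe (f p.1) (f p.2) := by
    rw [Okin, map_sum]
    exact Finset.sum_congr rfl (fun p _ => fE_oe f _ _)
  have hne : ∀ p ∈ S, f p.1 ≠ f p.2 := fun p hp => hf _ _ ((hmem p).mp hp).1
  have hsig : ∀ p, p ∈ S →
      (((fun j => 2 * p.1 j - p.2 j), p.1) : (Fin n → ZMod k) × (Fin n → ZMod k)) ∈ S := by
    intro p hp
    rw [hmem] at hp ⊢
    obtain ⟨hPadj, hpi⟩ := hp
    constructor
    · intro j
      rcases hPadj j with h | h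
      · left; show p.1 j = 2 * p.1 j - p.2 j + 1; rw [h]; ring
      · right; show p.1 j = 2 * p.1 j - p.2 j - 1; rw [h]; ring
    · show p.1 i = (2 * p.1 i - p.2 i) + 1
      rw [hpi]; ring
  have hpsi : ∀ p, p ∈ S →
      ((p.2, (fun j => 2 * p.2 j - p.1 j)) : (Fin n → ZMod k) × (Fin n → ZMod k)) ∈ S := by
    intro p hp
    rw [hmem] at hp ⊢
    obtain ⟨hPadj, hpi⟩ := hp
    constructor
    · intro j
      rcases hPadj j with h | h
      · left; show 2 * p.2 j - p.1 j = p.2 j + 1; rw [h]; ring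
      · right; show 2 * p.2 j - p.1 j = p.2 j - 1; rw [h]; ring
    · show 2 * p.2 i - p.1 i = p.2 i + 1
      rw [hpi]; ring
  have hbal : ∀ t : ZMod 3,
      (S.filter fun p => f p.1 = t).card = (S.filter fun p => f p.2 = t).card := by
    intro t
    refine Finset.card_nbij'
      (fun p => ((fun j => 2 * p.1 j - p.2 j), p.1))
      (fun p => (p.2, (fun j => 2 * p.2 j - p.1 j)))
      ?_ ?_ ?_ ?_
    · intro p hp
      rw [Finset.mem_coe, Finset.mem_filter] at hp ⊢
      exact ⟨hsig p hp.1, hp.2⟩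
    · intro p hp
      rw [Finset.mem_coe, Finset.mem_filter] at hp ⊢
      exact ⟨hpsi p hp.1, hp.2⟩
    · intro p _
      refine Prod.ext rfl ?_
      show (fun j => 2 * p.1 j - (2 * p.1 j - p.2 j)) = p.2
      funext j; ring
    · intro p _
      refine Prod.ext ?_ rfl
      show (fun j => 2 * p.2 j - (2 * p.2 j - p.1 j)) = p.1
      funext j; ring
  rw [hexp]
  exact key S _ _ hne hbal

end power4

section power5
variable {k n : ℕ} [NeZero k] {i : Fin n}

open Classical

lemma okin_double (hk : 3 ≤ k) (hn : 2 ≤ n) :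
    ∑ e ∈ Finset.univ.filter (fun e : (Fin n → ZMod k) × (Fin n → ZMod k) =>
        (∀ j, j ≠ i → CycAdj k (e.1 j) (e.2 j)) ∧ e.1 i = 0 ∧ e.2 i = 0),
      cross k n i e.1 e.2 = (2:ℕ) • Okin k n i := by
  obtain ⟨j0, hj0⟩ := exists_ne_idx hn i
  have step1 : ∀ e ∈ Finset.univ.filter (fun e : (Fin n → ZMod k) × (Fin n → ZMod k) =>
        (∀ j, j ≠ i → CycAdj k (e.1 j) (e.2 j)) ∧ e.1 i = 0 ∧ e.2 i = 0),
      cross k n i e.1 e.2 = ∑ p ∈ (Finset.univ : Finset ((Fin n → ZMod k) × (Fin n → ZMod k))),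
        if (((∀ j, j ≠ i → p.1 j = e.1 j ∧ p.2 j = e.2 j) ∨
             (∀ j, j ≠ i → p.1 j = e.2 j ∧ p.2 j = e.1 j)) ∧
            PowAdj k n p.1 p.2 ∧ p.2 i = p.1 i + 1) then oe p.1 p.2 else 0 := by
    intro e _
    rw [cross, Finset.sum_filter]
  rw [Finset.sum_congr rfl step1, Finset.sum_comm]
  have inner : ∀ p : (Fin n → ZMod k) × (Fin n → ZMod k),
      (∑ e ∈ Finset.univ.filter (fun e : (Fin n → ZMod k) × (Fin n → ZMod k) =>
          (∀ j, j ≠ i → CycAdj k (e.1 j) (e.2 j)) ∧ e.1 i = 0 ∧ e.2 i = 0),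
        if (((∀ j, j ≠ i → p.1 j = e.1 j ∧ p.2 j = e.2 j) ∨
             (∀ j, j ≠ i → p.1 j = e.2 j ∧ p.2 j = e.1 j)) ∧
            PowAdj k n p.1 p.2 ∧ p.2 i = p.1 i + 1) then oe p.1 p.2 else 0)
      = if (PowAdj k n p.1 p.2 ∧ p.2 i = p.1 i + 1) then (2:ℕ) • oe p.1 p.2 else 0 := by
    intro p
    rw [← Finset.sum_filter, Finset.sum_const]
    by_cases hP : PowAdj k n p.1 p.2 ∧ p.2 i = p.1 i + 1
    · rw [if_pos hP]
      have hpair : (Finset.univ.filter (fun e : (Fin n → ZMod k) × (Fin n → ZMod k) =>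
          (∀ j, j ≠ i → CycAdj k (e.1 j) (e.2 j)) ∧ e.1 i = 0 ∧ e.2 i = 0)).filter
            (fun e => ((∀ j, j ≠ i → p.1 j = e.1 j ∧ p.2 j = e.2 j) ∨
             (∀ j, j ≠ i → p.1 j = e.2 j ∧ p.2 j = e.1 j)) ∧
            PowAdj k n p.1 p.2 ∧ p.2 i = p.1 i + 1)
          = {(Function.update p.1 i 0, Function.update p.2 i 0),
             (Function.update p.2 i 0, Function.update p.1 i 0)} := by
        ext e
        simp only [Finset.mem_filter, Finset.mem_univ, true_and, Finset.mem_insert,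
          Finset.mem_singleton]
        constructor
        · rintro ⟨⟨hEadj, hE1, hE2⟩, hcase, hPadj, hpi⟩
          rcases hcase with hA | hB
          · left
            refine Prod.ext ?_ ?_
            · show e.1 = Function.update p.1 i 0
              funext j
              by_cases hji : j = i
              · subst hji; rw [Function.update_self]; exact hE1
              · rw [Function.update_of_ne hji]; exact ((hA j hji).1).symm
            · show e.2 = Function.update p.2 i 0
              funext j
              by_cases hji : j = i
              · subst hji; rw [Function.update_self]; exact hE2
              · rw [Function.update_of_ne hji]; exact ((hA j hji).2).symm
          · right
            refine Prod.ext ?_ ?_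
            · show e.1 = Function.update p.2 i 0
              funext j
              by_cases hji : j = i
              · subst hji; rw [Function.update_self]; exact hE1
              · rw [Function.update_of_ne hji]; exact ((hB j hji).2).symm
            · show e.2 = Function.update p.1 i 0
              funext j
              by_cases hji : j = i
              · subst hji; rw [Function.update_self]; exact hE2
              · rw [Function.update_of_ne hji]; exact ((hB j hji).1).symm
        · rintro (rfl | rfl)
          · refine ⟨⟨fun j hj => ?_, Function.update_self _ _ _, Function.update_self _ _ _⟩,
              Or.inl (fun j hj => ⟨(Function.update_of_ne hj _ _).symm,
                (Function.update_of_ne hj _ _).symm⟩), hP.1, hP.2⟩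
            show CycAdj k (Function.update p.1 i 0 j) (Function.update p.2 i 0 j)
            rw [Function.update_of_ne hj, Function.update_of_ne hj]
            exact hP.1 j
          · refine ⟨⟨fun j hj => ?_, Function.update_self _ _ _, Function.update_self _ _ _⟩,
              Or.inr (fun j hj => ⟨(Function.update_of_ne hj _ _).symm,
                (Function.update_of_ne hj _ _).symm⟩), hP.1, hP.2⟩
            show CycAdj k (Function.update p.2 i 0 j) (Function.update p.1 i 0 j)
            rw [Function.update_of_ne hj, Function.update_of_ne hj]
            exact cycAdj_symm (hP.1 j)
      have hnepair : (Function.update p.1 i 0, Function.update p.2 i 0)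
          ≠ (Function.update p.2 i 0, Function.update p.1 i 0) := by
        intro h
        have h1 := congrArg Prod.fst h
        have h2 := congrArg (fun q => q j0) h1
        simp only at h2
        rw [Function.update_of_ne hj0, Function.update_of_ne hj0] at h2
        exact cycAdj_irrefl hk _ (h2 ▸ hP.1 j0)
      rw [hpair, Finset.card_pair hnepair]
    · rw [if_neg hP]
      have hempty : (Finset.univ.filter (fun e : (Fin n → ZMod k) × (Fin n → ZMod k) =>
          (∀ j, j ≠ i → CycAdj k (e.1 j) (e.2 j)) ∧ e.1 i = 0 ∧ e.2 i = 0)).filter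
            (fun e => ((∀ j, j ≠ i → p.1 j = e.1 j ∧ p.2 j = e.2 j) ∨
             (∀ j, j ≠ i → p.1 j = e.2 j ∧ p.2 j = e.1 j)) ∧
            PowAdj k n p.1 p.2 ∧ p.2 i = p.1 i + 1) = ∅ :=
        Finset.filter_eq_empty_iff.mpr (fun e _ hc => hP ⟨hc.2.1, hc.2.2⟩)
      rw [hempty]
      simp
  rw [Finset.sum_congr rfl (fun p _ => inner p), ← Finset.sum_filter, ← Finset.smul_sum, Okin]

lemma adjPairs_card (hk : 3 ≤ k) (hkodd : Odd k) :
    (Finset.univ.filter (fun q : ZMod k × ZMod k => CycAdj k q.1 q.2)).card = 2 * k := by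
  have h2 : (2 : ZMod k) ≠ 0 := by
    intro h
    have h1 : ((2:ℕ) : ZMod k) = 0 := by exact_mod_cast h
    have := Nat.le_of_dvd (by norm_num) ((ZMod.natCast_eq_zero_iff 2 k).mp h1)
    omega
  have : (Finset.univ.filter (fun q : ZMod k × ZMod k => CycAdj k q.1 q.2)).card
      = (Finset.univ : Finset (ZMod k ⊕ ZMod k)).card := by
    refine Finset.card_nbij'
      (fun q => if q.2 = q.1 + 1 then Sum.inl q.1 else Sum.inr q.1)
      (fun z => Sum.elim (fun u => (u, u+1)) (fun u => (u, u-1)) z)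
      (fun q _ => Finset.mem_univ _) (fun z _ => ?_) (fun q hq => ?_) (fun z _ => ?_)
    · rcases z with u | u
      · simp only [Finset.mem_coe, Finset.mem_filter, Finset.mem_univ, true_and, Sum.elim_inl]
        left; rfl
      · simp only [Finset.mem_coe, Finset.mem_filter, Finset.mem_univ, true_and, Sum.elim_inr]
        right; rfl
    · simp only [Finset.mem_coe, Finset.mem_filter, Finset.mem_univ, true_and] at hq
      dsimp only
      by_cases h : q.2 = q.1 + 1
      · rw [if_pos h]
        show ((q.1, q.1 + 1) : ZMod k × ZMod k) = q
        exact Prod.ext rfl h.symm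
      · rw [if_neg h]
        show ((q.1, q.1 - 1) : ZMod k × ZMod k) = q
        rcases hq with hq | hq
        · exact (h hq).elim
        · exact Prod.ext rfl hq.symm
    · rcases z with u | u
      · show (if ((u, u+1) : ZMod k × ZMod k).2 = ((u, u+1) : ZMod k × ZMod k).1 + 1
            then Sum.inl (((u, u+1) : ZMod k × ZMod k).1) else Sum.inr (((u, u+1) : ZMod k × ZMod k).1))
            = Sum.inl u
        rw [if_pos rfl]
      · show (if ((u, u-1) : ZMod k × ZMod k).2 = ((u, u-1) : ZMod k × ZMod k).1 + 1
            then Sum.inl (((u, u-1) : ZMod k × ZMod k).1) else Sum.inr (((u, u-1) : ZMod k × ZMod k).1))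
            = Sum.inr u
        rw [if_neg ?_]
        intro h
        apply h2
        have hh : u - 1 = u + 1 := h
        have h' : (-1 : ZMod k) = 1 := by
          calc (-1 : ZMod k) = u - 1 - u := by ring
            _ = u + 1 - u := by rw [hh]
            _ = 1 := by ring
        calc (2 : ZMod k) = 1 - (-1) := by ring
          _ = 1 - 1 := by rw [h']
          _ = 0 := by ring
  rw [this, Finset.card_univ, Fintype.card_sum, ZMod.card]
  ring

lemma E_card (hk : 3 ≤ k) (hkodd : Odd k) (hn : 2 ≤ n) :
    (Finset.univ.filter (fun e : (Fin n → ZMod k) × (Fin n → ZMod k) =>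
        (∀ j, j ≠ i → CycAdj k (e.1 j) (e.2 j)) ∧ e.1 i = 0 ∧ e.2 i = 0)).card
      = (2*k)^(n-1) := by
  set T : Fin n → Finset (ZMod k × ZMod k) := fun j =>
    if j = i then ({((0:ZMod k),(0:ZMod k))} : Finset (ZMod k × ZMod k))
    else Finset.univ.filter (fun q : ZMod k × ZMod k => CycAdj k q.1 q.2) with hT
  have hbij : (Finset.univ.filter (fun e : (Fin n → ZMod k) × (Fin n → ZMod k) =>
        (∀ j, j ≠ i → CycAdj k (e.1 j) (e.2 j)) ∧ e.1 i = 0 ∧ e.2 i = 0)).card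
      = (Fintype.piFinset T).card := by
    refine Finset.card_nbij' (fun e => fun j => (e.1 j, e.2 j))
      (fun h => (fun j => (h j).1, fun j => (h j).2)) (fun e he => ?_) (fun h hh => ?_)
      (fun e _ => rfl) (fun h _ => ?_)
    · simp only [Finset.mem_coe, Finset.mem_filter, Finset.mem_univ, true_and] at he
      rw [Finset.mem_coe, Fintype.mem_piFinset]
      intro j
      by_cases hji : j = i
      · subst hji
        rw [hT]
        simp only [if_pos rfl, eq_self_iff_true, if_true, Finset.mem_singleton]
        show ((e.1 j, e.2 j) : ZMod k × ZMod k) = (0, 0)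
        rw [he.2.1, he.2.2]
      · rw [hT]
        simp only [if_neg hji, Finset.mem_filter, Finset.mem_univ, true_and]
        exact he.1 j hji
    · rw [Finset.mem_coe, Fintype.mem_piFinset] at hh
      simp only [Finset.mem_coe, Finset.mem_filter, Finset.mem_univ, true_and]
      refine ⟨fun j hj => ?_, ?_, ?_⟩
      · have := hh j
        rw [hT] at this
        simp only [if_neg hj, Finset.mem_filter, Finset.mem_univ, true_and] at this
        exact this
      · have := hh i
        rw [hT] at this
        simp only [eq_self_iff_true, if_true, Finset.mem_singleton] at this
        exact congrArg Prod.fst this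
      · have := hh i
        rw [hT] at this
        simp only [eq_self_iff_true, if_true, Finset.mem_singleton] at this
        exact congrArg Prod.snd this
    · funext j
      exact Prod.mk.eta
  rw [hbij, Fintype.card_piFinset, ← Finset.mul_prod_erase Finset.univ _ (Finset.mem_univ i)]
  have h1 : (T i).card = 1 := by
    rw [hT]
    simp
  have h2 : ∀ j ∈ Finset.univ.erase i, (T j).card = 2*k := by
    intro j hj
    rw [hT]
    simp only [if_neg (Finset.ne_of_mem_erase hj)]
    exact adjPairs_card hk hkodd
  rw [h1, one_mul, Finset.prod_congr rfl h2, Finset.prod_const, Finset.card_erase_of_mem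
    (Finset.mem_univ i), Finset.card_univ, Fintype.card_fin]

end power5

lemma cycO3_eval : cycO 3 (0,1) = 1 := by
  rw [cycO_three, Finsupp.add_apply, Finsupp.add_apply]
  simp (config := { decide := true }) only [oe_apply]


/-- Local-global consistency of the degree of a polymorphism `f : C_kⁿ → C_3` at
coordinate `i` (`n ≥ 2`, `k ≥ 3` odd): there is a single integer `d` with
`f_E(e ×ᵢ O_k) = 2d • O_3` for every unoriented edge `e` of `C_k^{n-1}`, and moreover
`f_E(O_{k,i}ⁿ) = (2k)^{n-1} d • O_3`. -/
theorem degree_local_global (k n : ℕ) [NeZero k] (hk : 3 ≤ k) (hkodd : Odd k)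
    (hn : 2 ≤ n) (f : (Fin n → ZMod k) → ZMod 3)
    (hf : ∀ x y, PowAdj k n x y → f x ≠ f y) (i : Fin n) :
    ∃ d : ℤ,
      (∀ ub vb : Fin n → ZMod k, (∀ j, j ≠ i → CycAdj k (ub j) (vb j)) →
        fE f (cross k n i ub vb) = (2 * d) • cycO 3) ∧
      fE f (Okin k n i) = ((2 * (k : ℤ)) ^ (n - 1) * d) • cycO 3 := by
  classical
  have h0 : ∀ j : Fin n, j ≠ i →
      CycAdj k ((fun _ => (0:ZMod k)) j) ((fun _ => (1:ZMod k)) j) := by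
    intro j _
    left
    show (1:ZMod k) = 0 + 1
    rw [zero_add]
  obtain ⟨hrep0, heven0⟩ := cross_rep hk hn f hf (fun _ => 0) (fun _ => 1) h0
  obtain ⟨d, hd⟩ := heven0
  have hloc : ∀ ub vb : Fin n → ZMod k, (∀ j, j ≠ i → CycAdj k (ub j) (vb j)) →
      fE f (cross k n i ub vb) = (2 * d) • cycO 3 := by
    intro ub vb hadj
    have hconst := cross_fE_const hk hn hkodd f hf ub vb (fun _ => 0) (fun _ => 1) hadj h0
    rw [hconst, hrep0, hd]
    congr 1
    ring
  refine ⟨d, hloc, ?_⟩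
  have hok := okin_rep (i := i) f hf
  have hdc := congrArg (fE f) (okin_double (i := i) hk hn)
  rw [map_sum, map_nsmul] at hdc
  have hsum : ∀ e ∈ Finset.univ.filter (fun e : (Fin n → ZMod k) × (Fin n → ZMod k) =>
        (∀ j, j ≠ i → CycAdj k (e.1 j) (e.2 j)) ∧ e.1 i = 0 ∧ e.2 i = 0),
      fE f (cross k n i e.1 e.2) = (2*d) • cycO 3 := by
    intro e he
    simp only [Finset.mem_filter, Finset.mem_univ, true_and] at he
    exact hloc e.1 e.2 he.1
  rw [Finset.sum_congr rfl hsum, Finset.sum_const, E_card hk hkodd hn] at hdc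
  have heval := congrArg (fun X : ZMod 3 × ZMod 3 →₀ ℤ => X (0,1)) hdc
  simp only [Finsupp.smul_apply, cycO3_eval, smul_eq_mul, mul_one, nsmul_eq_mul] at heval
  -- heval : ((2*k)^(n-1) : ℕ) * (2*d) = 2 * (fE f (Okin k n i) (0,1))
  have hco : fE f (Okin k n i) (0,1) = (2 * (k:ℤ))^(n-1) * d := by
    push_cast at heval
    have h2 : (2:ℤ) * (fE f (Okin k n i) (0,1)) = 2 * ((2 * (k:ℤ))^(n-1) * d) := by
      rw [← heval]
      ring
    exact mul_left_cancel₀ (by norm_num) h2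
  rw [hok, hco]
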